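/- Improving the capped objective improves CVaR: let Z and Z* be bounded real random variables, α ∈ (0,1), and C = VaR_α(Z*). If E[min(Z, C)] ≥ E[min(Z*, C)], then CVaR_α(Z) ≥ CVaR_α(Z*). -/

import Mathlib

open MeasureTheory

noncomputable def VaR {Ω : Type*} [MeasurableSpace Ω] (μ : Measure Ω) (Z : Ω → ℝ) (x : ℝ) : ℝ :=
  sInf {z : ℝ | x ≤ (μ {ω | Z ω ≤ z}).toReal}

noncomputable def CVaR {Ω : Type*} [MeasurableSpace Ω] (μ : Measure Ω) (Z : Ω → ℝ) (α : ℝ) : ℝ :=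
  (1 / α) * ∫ x in (0:ℝ)..α, VaR μ Z x

/-!
`VaR μ W` is the quantile function of `W`: for `x ∈ (0, 1]`, `VaR μ W x ≤ z ↔ x ≤ P(W ≤ z)`, by
right-continuity of the distribution function. Hence `VaR μ W` pushes Lebesgue measure on
`(0, 1]` forward to the law of `W`, and `E[g(W)] = ∫₀¹ g(VaR x) dx`. For `g = min · C`, splitting
at `α` gives `E[min(W, C)] ≤ ∫₀^α VaR + (1 - α) C = α CVaR_α(W) + (1 - α) C`, with equality
for `C = VaR_α(W)` since `VaR` is nondecreasing. Apply the equality to `Z*`, the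
inequality to `Z`, and divide by `α`.
-/

open Set Filter Topology ProbabilityTheory intervalIntegral

theorem StieltjesFunction.csInf_le_iff (f : StieltjesFunction ℝ) {x z : ℝ}
    (hne : {y | x ≤ f y}.Nonempty) (hbdd : BddBelow {y | x ≤ f y}) :
    sInf {y | x ≤ f y} ≤ z ↔ x ≤ f z := by
  refine ⟨fun hz => ?_, fun hz => csInf_le hbdd hz⟩
  set c := sInf {y | x ≤ f y}
  have hright : ∀ y ∈ Ioi c, x ≤ f y := fun y hy => by
    obtain ⟨s, hs, hsy⟩ := exists_lt_of_csInf_lt hne hy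
    exact hs.trans (f.mono hsy.le)
  have hc : x ≤ f c :=
    ge_of_tendsto ((f.right_continuous c).mono Ioi_subset_Ici_self)
      (eventually_nhdsWithin_of_forall hright)
  exact hc.trans (f.mono hz)

section MinIntegral

variable {q : ℝ → ℝ} {a b c : ℝ}

theorem IntervalIntegrable.min_const (hq : IntervalIntegrable q volume a b) (C : ℝ) :
    IntervalIntegrable (fun x => min (q x) C) volume a b :=
  ⟨hq.1.inf (integrableOn_const measure_Ioc_lt_top.ne),
    hq.2.inf (integrableOn_const measure_Ioc_lt_top.ne)⟩

theorem intervalIntegral.integral_min_le_add (hq : IntervalIntegrable q volume a b)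
    (hac : a ≤ c) (hcb : c ≤ b) (C : ℝ) :
    ∫ x in a..b, min (q x) C ≤ (∫ x in a..c, q x) + (b - c) * C := by
  have hc : c ∈ uIcc a b := mem_uIcc_of_le hac hcb
  have hmin := hq.min_const C
  rw [← integral_add_adjacent_intervals (hmin.mono_set (uIcc_subset_uIcc_left hc))
    (hmin.mono_set (uIcc_subset_uIcc_right hc)), ← smul_eq_mul, ← intervalIntegral.integral_const]
  gcongr ?_ + ?_
  · exact integral_mono_on hac (hmin.mono_set (uIcc_subset_uIcc_left hc))
      (hq.mono_set (uIcc_subset_uIcc_left hc)) fun x _ => min_le_left _ _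
  · exact integral_mono_on hcb (hmin.mono_set (uIcc_subset_uIcc_right hc))
      intervalIntegrable_const fun x _ => min_le_right _ _

theorem intervalIntegral.integral_min_eq_add_of_monotoneOn (hmono : MonotoneOn q (Ioc a b))
    (hq : IntervalIntegrable q volume a b) (hc : c ∈ Ioc a b) :
    ∫ x in a..b, min (q x) (q c) = (∫ x in a..c, q x) + (b - c) * q c := by
  have hc' : c ∈ uIcc a b := mem_uIcc_of_le hc.1.le hc.2
  have hmin := hq.min_const (q c)
  rw [← integral_add_adjacent_intervals (hmin.mono_set (uIcc_subset_uIcc_left hc'))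
    (hmin.mono_set (uIcc_subset_uIcc_right hc')), ← smul_eq_mul, ← intervalIntegral.integral_const]
  congr 1
  · refine integral_congr_ae (Eventually.of_forall fun x hx => min_eq_left ?_)
    rw [uIoc_of_le hc.1.le] at hx
    exact hmono ⟨hx.1, hx.2.trans hc.2⟩ hc hx.2
  · refine integral_congr_ae (Eventually.of_forall fun x hx => min_eq_right ?_)
    rw [uIoc_of_le hc.2] at hx
    exact hmono hc ⟨hc.1.trans hx.1, hx.2⟩ hx.1.le

end MinIntegral

section Quantile

variable {Ω : Type*} [MeasurableSpace Ω] {μ : Measure Ω} [IsProbabilityMeasure μ]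
  {W : Ω → ℝ} {M x : ℝ}

theorem measureReal_setOf_le_eq_one (hbd : ∀ ω, |W ω| ≤ M) {y : ℝ} (hy : M ≤ y) :
    μ.real {ω | W ω ≤ y} = 1 := by
  rw [eq_univ_of_forall (s := {ω | W ω ≤ y}) fun ω => (abs_le.1 (hbd ω)).2.trans hy, probReal_univ]

omit [IsProbabilityMeasure μ] in
theorem measureReal_setOf_le_eq_zero (hbd : ∀ ω, |W ω| ≤ M) {y : ℝ} (hy : y < -M) :
    μ.real {ω | W ω ≤ y} = 0 := by
  rw [eq_empty_of_forall_notMem (s := {ω | W ω ≤ y})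
    fun ω hω => (hy.trans_le (abs_le.1 (hbd ω)).1).not_ge hω, measureReal_empty]

theorem VaR_le_iff (hW : Measurable W) (hbd : ∀ ω, |W ω| ≤ M) (hx : x ∈ Ioc 0 1) (z : ℝ) :
    VaR μ W x ≤ z ↔ x ≤ μ.real {ω | W ω ≤ z} := by
  have : IsProbabilityMeasure (μ.map W) := Measure.isProbabilityMeasure_map hW.aemeasurable
  have hcdf : ∀ y, μ.real {ω | W ω ≤ y} = cdf (μ.map W) y := fun y => by
    rw [cdf_eq_real, map_measureReal_apply hW measurableSet_Iic]
    rfl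
  change sInf {y | x ≤ μ.real {ω | W ω ≤ y}} ≤ z ↔ _
  simp only [hcdf]
  refine (cdf (μ.map W)).csInf_le_iff ⟨M, ?_⟩ ⟨-M, fun y hy => ?_⟩
  · rw [mem_ofPred_eq, ← hcdf, measureReal_setOf_le_eq_one hbd le_rfl]
    exact hx.2
  · by_contra! hy'
    rw [mem_ofPred_eq, ← hcdf, measureReal_setOf_le_eq_zero hbd hy'] at hy
    exact hx.1.not_ge hy

theorem VaR_monotoneOn (hW : Measurable W) (hbd : ∀ ω, |W ω| ≤ M) :
    MonotoneOn (VaR μ W) (Ioc 0 1) := fun _ hx _ hy hxy =>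
  (VaR_le_iff hW hbd hx _).2 (hxy.trans ((VaR_le_iff hW hbd hy _).1 le_rfl))

theorem abs_VaR_le (hW : Measurable W) (hbd : ∀ ω, |W ω| ≤ M) (hx : x ∈ Ioc 0 1) :
    |VaR μ W x| ≤ M := by
  refine abs_le.2 ⟨?_, (VaR_le_iff (μ := μ) hW hbd hx M).2 ?_⟩
  · by_contra! h
    have hmem := (VaR_le_iff (μ := μ) hW hbd hx _).1 le_rfl
    rw [measureReal_setOf_le_eq_zero hbd h] at hmem
    exact hx.1.not_ge hmem
  · rw [measureReal_setOf_le_eq_one hbd le_rfl]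
    exact hx.2

theorem map_VaR_restrict_Ioc (hW : Measurable W) (hbd : ∀ ω, |W ω| ≤ M) :
    (volume.restrict (Ioc 0 1)).map (VaR μ W) = μ.map W := by
  have hae : AEMeasurable (VaR μ W) (volume.restrict (Ioc 0 1)) :=
    aemeasurable_restrict_of_monotoneOn measurableSet_Ioc (VaR_monotoneOn hW hbd)
  refine Measure.ext_of_Iic _ _ fun z => ?_
  have hpre : VaR μ W ⁻¹' Iic z ∩ Ioc 0 1 = Ioc 0 (μ.real {ω | W ω ≤ z}) := by
    ext x
    simp only [mem_inter_iff, mem_preimage, mem_Iic, mem_Ioc]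
    constructor
    · rintro ⟨hz, hx0, hx1⟩
      exact ⟨hx0, (VaR_le_iff hW hbd ⟨hx0, hx1⟩ z).1 hz⟩
    · rintro ⟨hx0, hxz⟩
      have hx1 : x ≤ 1 := hxz.trans measureReal_le_one
      exact ⟨(VaR_le_iff hW hbd ⟨hx0, hx1⟩ z).2 hxz, hx0, hx1⟩
  rw [Measure.map_apply_of_aemeasurable hae measurableSet_Iic,
    Measure.restrict_apply' measurableSet_Ioc, hpre, Real.volume_Ioc, sub_zero,
    Measure.map_apply hW measurableSet_Iic, ofReal_measureReal]
  rfl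

theorem intervalIntegrable_VaR (hW : Measurable W) (hbd : ∀ ω, |W ω| ≤ M) :
    IntervalIntegrable (VaR μ W) volume 0 1 :=
  (intervalIntegrable_iff_integrableOn_Ioc_of_le zero_le_one).2 <|
    .of_bound measure_Ioc_lt_top
      (aemeasurable_restrict_of_monotoneOn measurableSet_Ioc
        (VaR_monotoneOn hW hbd)).aestronglyMeasurable M
      (ae_restrict_of_forall_mem measurableSet_Ioc fun _ hx => abs_VaR_le hW hbd hx)

theorem integral_comp_eq_intervalIntegral_comp_VaR {E : Type*} [NormedAddCommGroup E]
    [NormedSpace ℝ E] (hW : Measurable W) (hbd : ∀ ω, |W ω| ≤ M) {g : ℝ → E}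
    (hg : StronglyMeasurable g) :
    ∫ ω, g (W ω) ∂μ = ∫ x in 0..1, g (VaR μ W x) := by
  rw [intervalIntegral.integral_of_le zero_le_one,
    ← integral_map hW.aemeasurable hg.aestronglyMeasurable, ← map_VaR_restrict_Ioc hW hbd,
    integral_map (aemeasurable_restrict_of_monotoneOn measurableSet_Ioc (VaR_monotoneOn hW hbd))
      hg.aestronglyMeasurable]

end Quantile

section CVaR

variable {Ω : Type*} [MeasurableSpace Ω] {μ : Measure Ω} {W : Ω → ℝ} {M α : ℝ}

theorem mul_CVaR (hα : α ≠ 0) : α * CVaR μ W α = ∫ x in 0..α, VaR μ W x := by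
  rw [CVaR, ← mul_assoc, mul_one_div_cancel hα, one_mul]

variable [IsProbabilityMeasure μ]

theorem integral_min_le_mul_CVaR_add (hW : Measurable W) (hbd : ∀ ω, |W ω| ≤ M)
    (hα : α ∈ Ioc 0 1) (C : ℝ) :
    ∫ ω, min (W ω) C ∂μ ≤ α * CVaR μ W α + (1 - α) * C := by
  rw [mul_CVaR hα.1.ne', integral_comp_eq_intervalIntegral_comp_VaR hW hbd
    (g := fun y => min y C) (measurable_id.min measurable_const).stronglyMeasurable]
  exact integral_min_le_add (intervalIntegrable_VaR hW hbd) hα.1.le hα.2 C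

theorem integral_min_VaR_eq_mul_CVaR_add (hW : Measurable W) (hbd : ∀ ω, |W ω| ≤ M)
    (hα : α ∈ Ioc 0 1) :
    ∫ ω, min (W ω) (VaR μ W α) ∂μ = α * CVaR μ W α + (1 - α) * VaR μ W α := by
  rw [mul_CVaR hα.1.ne', integral_comp_eq_intervalIntegral_comp_VaR hW hbd
    (g := fun y => min y (VaR μ W α)) (measurable_id.min measurable_const).stronglyMeasurable]
  exact integral_min_eq_add_of_monotoneOn (VaR_monotoneOn hW hbd)
    (intervalIntegrable_VaR hW hbd) hα

end CVaR

theorem capped_improvement_improves_cvar {Ω : Type*} [MeasurableSpace Ω] (μ : Measure Ω)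
    [IsProbabilityMeasure μ] (Z Zstar : Ω → ℝ) (hZ : Measurable Z) (hZstar : Measurable Zstar)
    (M : ℝ) (hbdZ : ∀ ω, |Z ω| ≤ M) (hbdZstar : ∀ ω, |Zstar ω| ≤ M)
    (α : ℝ) (hα : 0 < α) (hα1 : α < 1)
    (h : ∫ ω, min (Zstar ω) (VaR μ Zstar α) ∂μ ≤ ∫ ω, min (Z ω) (VaR μ Zstar α) ∂μ) :
    CVaR μ Zstar α ≤ CVaR μ Z α := by
  have hα' : α ∈ Ioc 0 1 := ⟨hα, hα1.le⟩
  have hZstar_eq := integral_min_VaR_eq_mul_CVaR_add (μ := μ) hZstar hbdZstar hα'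
  have hZ_le := integral_min_le_mul_CVaR_add (μ := μ) hZ hbdZ hα' (VaR μ Zstar α)
  exact le_of_mul_le_mul_left (by linarith) hα
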